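/- arXiv:1512.04589 — 7 statements merged into one kernel-verified Lean document; each statement's English description precedes it below -/
import Mathlib

section
/- Let X be a Hausdorff locally convex space, and let {F_ι}_{ι∈I} and {G_κ}_{κ∈K} be two families of linear operators X → X, each sequentially equicontinuous. Then the family of all compositions {F_ι ∘ G_κ}_{(ι,κ)∈I×K} is sequentially equicontinuous. -/
/-!
Sequential equicontinuity of a family `T` at `a` says that `T (k n) (u n) - T (k n) a → 0` for
every sequence `u n → a` and every choice of indices `k n`: a uniform statement over the family
fails along some sequence exactly when it fails along the worst index at each time. In this form
composition is immediate: `w n := G (k n) (u n) - G (k n) a` tends to `0`, and additivity of `F`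
turns `F (j n) (w n) - F (j n) 0` into the difference of the compositions.
-/

open Filter Topology

theorem Filter.eventually_forall_iff_forall_eventually_comp {α ι : Type*} {l : Filter α}
    {p : ι → α → Prop} : (∀ᶠ a in l, ∀ i, p i a) ↔ ∀ k : α → ι, ∀ᶠ a in l, p (k a) a := by
  refine ⟨fun h k => h.mono fun a ha => ha (k a), fun h => ?_⟩
  by_contra hne
  simp only [not_eventually, not_forall] at hne
  obtain ⟨-, i₀, -⟩ := hne.exists
  have hworst : ∀ a, ∃ i, (∃ j, ¬p j a) → ¬p i a := fun a => by
    by_cases hbad : ∃ j, ¬p j a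
    · exact ⟨hbad.choose, fun _ => hbad.choose_spec⟩
    · exact ⟨i₀, fun h' => absurd h' hbad⟩
  choose k hk using hworst
  obtain ⟨a, hbad, hgood⟩ := (hne.and_eventually (h k)).exists
  exact hk a hbad hgood

section SeqEquicontinuous

variable {X Y Z : Type*} [TopologicalSpace X] [AddGroup Y] [TopologicalSpace Y]
  [AddGroup Z] [TopologicalSpace Z] {ι I K : Type*}

def SeqEquicontinuous (T : ι → X → Y) : Prop :=
  ∀ (u : ℕ → X) (a : X), Tendsto u atTop (𝓝 a) → ∀ U ∈ 𝓝 (0 : Y),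
    ∀ᶠ n in atTop, ∀ i, T i (u n) - T i a ∈ U

theorem seqEquicontinuous_iff_tendsto_comp {T : ι → X → Y} :
    SeqEquicontinuous T ↔ ∀ (u : ℕ → X) (a : X), Tendsto u atTop (𝓝 a) →
      ∀ k : ℕ → ι, Tendsto (fun n => T (k n) (u n) - T (k n) a) atTop (𝓝 0) := by
  simp only [SeqEquicontinuous, eventually_forall_iff_forall_eventually_comp]
  exact forall₃_congr fun _ _ _ => ⟨fun h k _ hU => h _ hU k, fun h _ hU k => h k hU⟩

theorem SeqEquicontinuous.comp {𝓕 : Type*} [FunLike 𝓕 Y Z] [AddMonoidHomClass 𝓕 Y Z]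
    {F : I → 𝓕} {G : K → X → Y} (hF : SeqEquicontinuous fun i => ⇑(F i))
    (hG : SeqEquicontinuous G) : SeqEquicontinuous fun p : I × K => F p.1 ∘ G p.2 := by
  rw [seqEquicontinuous_iff_tendsto_comp] at hF hG ⊢
  intro u a hu k
  have hFG := hF _ 0 (hG u a hu fun n => (k n).2) fun n => (k n).1
  simpa only [Function.comp_apply, map_sub, map_zero, sub_zero] using hFG

end SeqEquicontinuous

theorem stmt3_general {X : Type*}
    [AddCommGroup X] [Module ℝ X] [TopologicalSpace X]
    {I K : Type*} (F : I → X →ₗ[ℝ] X) (G : K → X →ₗ[ℝ] X)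
    (hF : ∀ (u : ℕ → X) (a : X), Tendsto u atTop (𝓝 a) → ∀ U ∈ 𝓝 (0 : X),
      ∀ᶠ n in atTop, ∀ i, F i (u n) - F i a ∈ U)
    (hG : ∀ (u : ℕ → X) (a : X), Tendsto u atTop (𝓝 a) → ∀ U ∈ 𝓝 (0 : X),
      ∀ᶠ n in atTop, ∀ k, G k (u n) - G k a ∈ U) :
    ∀ (u : ℕ → X) (a : X), Tendsto u atTop (𝓝 a) → ∀ U ∈ 𝓝 (0 : X),
      ∀ᶠ n in atTop, ∀ p : I × K, F p.1 (G p.2 (u n)) - F p.1 (G p.2 a) ∈ U :=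
  SeqEquicontinuous.comp hF hG

/-- The compositions of two sequentially equicontinuous families of linear
operators on a Hausdorff locally convex space form a sequentially equicontinuous family. -/
theorem stmt3 {X : Type*}
    [AddCommGroup X] [Module ℝ X] [TopologicalSpace X] [IsTopologicalAddGroup X]
    [ContinuousSMul ℝ X] [LocallyConvexSpace ℝ X] [T2Space X]
    {I K : Type*} (F : I → X →ₗ[ℝ] X) (G : K → X →ₗ[ℝ] X)
    (hF : ∀ (u : ℕ → X) (a : X), Tendsto u atTop (𝓝 a) → ∀ U ∈ 𝓝 (0 : X),
      ∀ᶠ n in atTop, ∀ i, F i (u n) - F i a ∈ U)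
    (hG : ∀ (u : ℕ → X) (a : X), Tendsto u atTop (𝓝 a) → ∀ U ∈ 𝓝 (0 : X),
      ∀ᶠ n in atTop, ∀ k, G k (u n) - G k a ∈ U) :
    ∀ (u : ℕ → X) (a : X), Tendsto u atTop (𝓝 a) → ∀ U ∈ 𝓝 (0 : X),
      ∀ᶠ n in atTop, ∀ p : I × K, F p.1 (G p.2 (u n)) - F p.1 (G p.2 a) ∈ U :=
  stmt3_general F G hF hG
end

section
/- Let X be a Hausdorff locally convex space and let {F_ι : X → X}_{ι∈I} be a sequentially equicontinuous family of linear operators. Then the family is equibounded: for every bounded subset D ⊆ X, the set {F_ι(x) : ι∈I, x∈D} is bounded in X. -/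
/-!
A set `S` is bounded iff `εₙ • yₙ → 0` for every sequence `yₙ ∈ S`, where `εₙ → 0` is a fixed
sequence of nonzero scalars. For `yₙ = F iₙ xₙ` with `xₙ` in a bounded set, linearity gives
`εₙ • yₙ = F iₙ (εₙ • xₙ)` with `εₙ • xₙ → 0`, and sequential equicontinuity at `0` makes this
tend to `0` even though the operator `F iₙ` changes with `n`.
-/

open Filter Topology Pointwise

theorem Bornology.IsVonNBounded.iUnion_image_of_tendsto_zero {𝕜 E F I : Type*}
    [NontriviallyNormedField 𝕜] [AddCommGroup E] [Module 𝕜 E] [TopologicalSpace E]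
    [AddCommGroup F] [Module 𝕜 F] [TopologicalSpace F] [ContinuousSMul 𝕜 F]
    {D : Set E} (hD : IsVonNBounded 𝕜 D) (f : I → E →ₗ[𝕜] F)
    (hf : ∀ (u : ℕ → E) (i : ℕ → I), Tendsto u atTop (𝓝 0) →
      Tendsto (fun n ↦ f (i n) (u n)) atTop (𝓝 0)) :
    IsVonNBounded 𝕜 (⋃ i, f i '' D) := by
  obtain ⟨ε, hε, hε₀⟩ : ∃ ε : ℕ → 𝕜, Tendsto ε atTop (𝓝 0) ∧ ∀ᶠ n in atTop, ε n ≠ 0 := by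
    simpa only [tendsto_nhdsWithin_iff] using! exists_seq_tendsto (𝓝[≠] (0 : 𝕜))
  refine isVonNBounded_of_smul_tendsto_zero hε₀ fun y hy ↦ ?_
  choose i x hxD hfx using fun n ↦ Set.mem_iUnion.mp (hy n)
  have hεy : ε • y = fun n ↦ f (i n) (ε n • x n) := by
    ext n
    simp [← hfx n]
  rw [hεy]
  exact hf _ i (hD.smul_tendsto_zero (.of_forall hxD) hε)

theorem stmt4_general {X : Type*}
    [AddCommGroup X] [Module ℝ X] [TopologicalSpace X]
    [ContinuousSMul ℝ X]
    {I : Type*} (F : I → X →ₗ[ℝ] X)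
    (hF : ∀ (u : ℕ → X) (a : X), Tendsto u atTop (𝓝 a) → ∀ U ∈ 𝓝 (0 : X),
      ∀ᶠ n in atTop, ∀ i, F i (u n) - F i a ∈ U)
    (D : Set X) (hD : Bornology.IsVonNBounded ℝ D) :
    Bornology.IsVonNBounded ℝ {y : X | ∃ i, ∃ x ∈ D, F i x = y} := by
  have hF₀ : ∀ (u : ℕ → X) (i : ℕ → I), Tendsto u atTop (𝓝 0) →
      Tendsto (fun n ↦ F (i n) (u n)) atTop (𝓝 0) := fun u i hu U hU ↦
    (hF u 0 hu U hU).mono fun n hn ↦ by simpa using hn (i n)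
  convert hD.iUnion_image_of_tendsto_zero F hF₀ using 1
  ext
  simp

/-- A sequentially equicontinuous family of linear operators on a Hausdorff
locally convex space is equibounded: it maps every bounded set to a bounded set, uniformly
in the family parameter. -/
theorem stmt4 {X : Type*}
    [AddCommGroup X] [Module ℝ X] [TopologicalSpace X] [IsTopologicalAddGroup X]
    [ContinuousSMul ℝ X] [LocallyConvexSpace ℝ X] [T2Space X]
    {I : Type*} (F : I → X →ₗ[ℝ] X)
    (hF : ∀ (u : ℕ → X) (a : X), Tendsto u atTop (𝓝 a) → ∀ U ∈ 𝓝 (0 : X),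
      ∀ᶠ n in atTop, ∀ i, F i (u n) - F i a ∈ U)
    (D : Set X) (hD : Bornology.IsVonNBounded ℝ D) :
    Bornology.IsVonNBounded ℝ {y : X | ∃ i, ∃ x ∈ D, F i x = y} :=
  stmt4_general F hF D hD
end

section
/- Let E be a metric space. The map Φ sending a finite countably additive signed Borel measure μ on E to the functional f ↦ ∫_E f dμ on C_b(E) is a linear isometric embedding of the space ca(E) of such measures (with the total variation norm) into the continuous dual of (C_b(E), ‖·‖_∞) with its operator norm. -/
/-!
Write `μ = μ⁺ - μ⁻` for the Jordan decomposition. The integral `∫ f dμ⁺ - ∫ f dμ⁻` can be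
computed from any decomposition of `μ` as a difference of finite measures, which gives linearity.
If all these integrals vanish, then `μ⁺` and `μ⁻` have the same integrals against bounded
continuous functions, so they coincide. The bound `|∫ f dμ| ≤ ‖f‖ |μ|(E)` is immediate; for the
converse, `μ⁺` and `μ⁻` live on complementary Borel sets, which by outer regularity contain
disjoint closed sets `K`, `L` of almost full `μ⁺`, resp. `μ⁻`, measure, and an Urysohn function
with values in `[-1, 1]`, equal to `1` on `K` and `-1` on `L`, has integral close to `|μ|(E)`.
-/

open Filter Topology MeasureTheory

/-- Integration of a function against a finite countably additive signed Borel measure,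
via its Jordan decomposition. -/
noncomputable def intSM' {E : Type*} [MeasurableSpace E]
    (s : SignedMeasure E) (f : E → ℝ) : ℝ :=
  (∫ x, f x ∂s.toJordanDecomposition.posPart) -
    ∫ x, f x ∂s.toJordanDecomposition.negPart

open Set
open scoped BoundedContinuousFunction

theorem intSM'_smul {E : Type*} [MeasurableSpace E] (c : ℝ) (s : SignedMeasure E) (f : E → ℝ) :
    intSM' (c • s) f = c * intSM' s f := by
  simp only [intSM', SignedMeasure.toJordanDecomposition_smul_real]
  rcases le_or_gt 0 c with hc | hc
  · rw [JordanDecomposition.real_smul_posPart_nonneg _ _ hc,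
      JordanDecomposition.real_smul_negPart_nonneg _ _ hc]
    simp only [integral_smul_nnreal_measure, NNReal.smul_def, smul_eq_mul,
      Real.coe_toNNReal _ hc]
    ring
  · rw [JordanDecomposition.real_smul_posPart_neg _ _ hc,
      JordanDecomposition.real_smul_negPart_neg _ _ hc]
    simp only [integral_smul_nnreal_measure, NNReal.smul_def, smul_eq_mul,
      Real.coe_toNNReal _ (neg_nonneg.2 hc.le)]
    ring

section Linear

variable {E : Type*} [MeasurableSpace E] [TopologicalSpace E] [OpensMeasurableSpace E]

theorem intSM'_eq_integral_sub_integral {s : SignedMeasure E} {μ ν : Measure E}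
    [IsFiniteMeasure μ] [IsFiniteMeasure ν]
    (h : s = μ.toSignedMeasure - ν.toSignedMeasure) (f : E →ᵇ ℝ) :
    intSM' s f = ∫ x, f x ∂μ - ∫ x, f x ∂ν := by
  set p := s.toJordanDecomposition.posPart
  set q := s.toJordanDecomposition.negPart
  have hpq : p + ν = μ + q := by
    have hs : p.toSignedMeasure - q.toSignedMeasure = μ.toSignedMeasure - ν.toSignedMeasure :=
      s.toSignedMeasure_toJordanDecomposition.trans h
    rwa [sub_eq_sub_iff_add_eq_add, ← Measure.toSignedMeasure_add,
      ← Measure.toSignedMeasure_add, Measure.toSignedMeasure_eq_toSignedMeasure_iff] at hs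
  have hint : ∫ x, f x ∂p + ∫ x, f x ∂ν = ∫ x, f x ∂μ + ∫ x, f x ∂q := by
    rw [← integral_add_measure (f.integrable p) (f.integrable ν),
      ← integral_add_measure (f.integrable μ) (f.integrable q), hpq]
  rw [intSM']
  linarith

theorem intSM'_add (s t : SignedMeasure E) (f : E →ᵇ ℝ) :
    intSM' (s + t) f = intSM' s f + intSM' t f := by
  have hst : s + t =
      (s.toJordanDecomposition.posPart + t.toJordanDecomposition.posPart).toSignedMeasure -
        (s.toJordanDecomposition.negPart + t.toJordanDecomposition.negPart).toSignedMeasure := by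
    rw [Measure.toSignedMeasure_add, Measure.toSignedMeasure_add]
    conv_lhs => rw [← s.toSignedMeasure_toJordanDecomposition,
      ← t.toSignedMeasure_toJordanDecomposition]
    simp only [JordanDecomposition.toSignedMeasure]
    abel
  rw [intSM'_eq_integral_sub_integral hst, integral_add_measure (f.integrable _) (f.integrable _),
    integral_add_measure (f.integrable _) (f.integrable _), intSM', intSM']
  ring

theorem intSM'_sub (s t : SignedMeasure E) (f : E →ᵇ ℝ) :
    intSM' (s - t) f = intSM' s f - intSM' t f := by
  rw [sub_eq_add_neg, ← neg_one_smul ℝ t, intSM'_add, intSM'_smul]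
  ring

end Linear

section Injective

variable {E : Type*} [MeasurableSpace E] [TopologicalSpace E] [HasOuterApproxClosed E]
  [BorelSpace E]

theorem eq_zero_of_forall_intSM'_eq_zero {s : SignedMeasure E}
    (h : ∀ f : E →ᵇ ℝ, intSM' s f = 0) : s = 0 := by
  have hpq : s.toJordanDecomposition.posPart = s.toJordanDecomposition.negPart :=
    ext_of_forall_integral_eq_of_IsFiniteMeasure fun f => sub_eq_zero.1 (h f)
  rw [← s.toSignedMeasure_toJordanDecomposition, JordanDecomposition.toSignedMeasure,
    Measure.toSignedMeasure_congr hpq,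
    sub_self]

theorem eq_of_forall_intSM'_eq {s t : SignedMeasure E}
    (h : ∀ f : E →ᵇ ℝ, intSM' s f = intSM' t f) : s = t :=
  sub_eq_zero.1 <| eq_zero_of_forall_intSM'_eq_zero fun f => by rw [intSM'_sub, h, sub_self]

end Injective

theorem MeasureTheory.SignedMeasure.toReal_totalVariation_univ {E : Type*} [MeasurableSpace E]
    (s : SignedMeasure E) :
    (s.totalVariation univ).toReal =
      s.toJordanDecomposition.posPart.real univ + s.toJordanDecomposition.negPart.real univ := by
  rw [SignedMeasure.totalVariation, Measure.add_apply,
    ENNReal.toReal_add (measure_ne_top _ _) (measure_ne_top _ _)]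
  rfl

theorem abs_intSM'_le {E : Type*} [MeasurableSpace E] [TopologicalSpace E]
    [OpensMeasurableSpace E] (s : SignedMeasure E) (f : E →ᵇ ℝ) :
    |intSM' s f| ≤ ‖f‖ * (s.totalVariation univ).toReal := by
  rw [SignedMeasure.toReal_totalVariation_univ, intSM']
  calc _ ≤ |∫ x, f x ∂s.toJordanDecomposition.posPart| +
        |∫ x, f x ∂s.toJordanDecomposition.negPart| := abs_sub _ _
    _ ≤ s.toJordanDecomposition.posPart.real univ * ‖f‖ +
        s.toJordanDecomposition.negPart.real univ * ‖f‖ :=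
      add_le_add (f.norm_integral_le_mul_norm _) (f.norm_integral_le_mul_norm _)
    _ = _ := by ring

theorem measureReal_sub_measureReal_compl_le_integral {E : Type*} [MeasurableSpace E]
    {μ : Measure E} [IsFiniteMeasure μ] {f : E → ℝ} {K : Set E} (hK : MeasurableSet K)
    (hf : Integrable f μ) (hfK : EqOn f 1 K) (hf_ge : ∀ x, -1 ≤ f x) :
    μ.real K - μ.real Kᶜ ≤ ∫ x, f x ∂μ := by
  have hK_int : ∫ x in K, f x ∂μ = μ.real K := by
    rw [setIntegral_congr_fun hK hfK]
    simp
  have hKc_int : ∫ x in Kᶜ, (-1 : ℝ) ∂μ ≤ ∫ x in Kᶜ, f x ∂μ :=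
    setIntegral_mono (integrableOn_const (measure_ne_top _ _)) hf.integrableOn hf_ge
  rw [setIntegral_const, smul_eq_mul, mul_neg_one] at hKc_int
  rw [← integral_add_compl hK hf, hK_int]
  linarith

theorem exists_isClosed_subset_compl_measureReal_compl_lt {E : Type*} [MeasurableSpace E]
    [TopologicalSpace E] {μ : Measure E} [μ.OuterRegular] {u : Set E} (hu : μ u = 0) {δ : ℝ}
    (hδ : 0 < δ) : ∃ K, IsClosed K ∧ K ⊆ uᶜ ∧ μ.real Kᶜ < δ := by
  obtain ⟨U, hUu, hU, hμU⟩ := u.exists_isOpen_lt_of_lt (ENNReal.ofReal δ)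
    (by rw [hu]; exact ENNReal.ofReal_pos.2 hδ)
  refine ⟨Uᶜ, hU.isClosed_compl, compl_subset_compl.2 hUu, ?_⟩
  rw [compl_compl, measureReal_def]
  exact ENNReal.toReal_lt_of_lt_ofReal hμU

theorem MeasureTheory.Measure.MutuallySingular.exists_norm_le_one_sub_lt_integral_sub_integral {E : Type*}
    [MeasurableSpace E] [TopologicalSpace E] [NormalSpace E] [OpensMeasurableSpace E]
    {μ ν : Measure E} [IsFiniteMeasure μ] [IsFiniteMeasure ν] [μ.OuterRegular] [ν.OuterRegular]
    (h : μ ⟂ₘ ν) {ε : ℝ} (hε : 0 < ε) :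
    ∃ g : E →ᵇ ℝ, ‖g‖ ≤ 1 ∧ μ.real univ + ν.real univ - ε < ∫ x, g x ∂μ - ∫ x, g x ∂ν := by
  obtain ⟨u, -, hμu, hνu⟩ := h
  obtain ⟨K, hK, hKu, hμK⟩ :=
    exists_isClosed_subset_compl_measureReal_compl_lt hμu (by positivity : 0 < ε / 4)
  obtain ⟨L, hL, hLu, hνL⟩ :=
    exists_isClosed_subset_compl_measureReal_compl_lt hνu (by positivity : 0 < ε / 4)
  rw [compl_compl] at hLu
  obtain ⟨g, hgL, hgK, hg⟩ := exists_bounded_mem_Icc_of_closed_of_le hL hK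
    (disjoint_compl_right.mono hLu hKu) (by norm_num : (-1 : ℝ) ≤ 1)
  have hμg := measureReal_sub_measureReal_compl_le_integral (μ := μ) hK.measurableSet
    (g.integrable μ) hgK fun x => (hg x).1
  have hνg := measureReal_sub_measureReal_compl_le_integral (μ := ν) (f := fun x => -g x)
    hL.measurableSet
    (g.integrable ν).neg (fun x hx => by simp [hgL hx]) fun x => neg_le_neg (hg x).2
  rw [integral_neg] at hνg
  refine ⟨g, (BoundedContinuousFunction.norm_le zero_le_one).2 fun x => abs_le.2 (hg x), ?_⟩
  rw [← measureReal_add_measureReal_compl hK.measurableSet,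
    ← measureReal_add_measureReal_compl hL.measurableSet]
  linarith

section TotalVariation

variable {E : Type*} [PseudoMetricSpace E] [MeasurableSpace E] [BorelSpace E]

theorem exists_norm_le_one_sub_lt_intSM' (s : SignedMeasure E) {ε : ℝ} (hε : 0 < ε) :
    ∃ g : E →ᵇ ℝ, ‖g‖ ≤ 1 ∧ (s.totalVariation univ).toReal - ε < intSM' s g := by
  rw [SignedMeasure.toReal_totalVariation_univ]
  exact s.toJordanDecomposition.mutuallySingular.exists_norm_le_one_sub_lt_integral_sub_integral hε

theorem sSup_abs_intSM'_eq_toReal_totalVariation (s : SignedMeasure E) :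
    sSup {r : ℝ | ∃ f : E →ᵇ ℝ, ‖f‖ ≤ 1 ∧ r = |intSM' s f|} = (s.totalVariation univ).toReal := by
  refine csSup_eq_of_forall_le_of_forall_lt_exists_gt ⟨_, 0, norm_zero.le.trans zero_le_one, rfl⟩
    ?_ fun w hw => ?_
  · rintro _ ⟨f, hf, rfl⟩
    exact (abs_intSM'_le s f).trans (mul_le_of_le_one_left ENNReal.toReal_nonneg hf)
  · obtain ⟨g, hg, hlt⟩ := exists_norm_le_one_sub_lt_intSM' s (sub_pos.2 hw)
    exact ⟨_, ⟨g, hg, rfl⟩, by linarith [le_abs_self (intSM' s g)]⟩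

end TotalVariation

/-- The map Φ sending a finite countably additive signed Borel measure μ to
the functional f ↦ ∫ f dμ on C_b(E) is a linear isometric embedding of ca(E) (with the
total variation norm) into the dual of (C_b(E), ‖·‖_∞): it is additive, homogeneous,
injective, and the operator norm of Φ μ equals the total variation of μ. -/
theorem stmt8 {E : Type*} [MetricSpace E] [MeasurableSpace E] [BorelSpace E] :
    (∀ s t : SignedMeasure E, ∀ f : BoundedContinuousFunction E ℝ,
      intSM' (s + t) ⇑f = intSM' s ⇑f + intSM' t ⇑f) ∧
    (∀ (c : ℝ) (s : SignedMeasure E) (f : BoundedContinuousFunction E ℝ),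
      intSM' (c • s) ⇑f = c * intSM' s ⇑f) ∧
    (∀ s t : SignedMeasure E,
      (∀ f : BoundedContinuousFunction E ℝ, intSM' s ⇑f = intSM' t ⇑f) → s = t) ∧
    (∀ s : SignedMeasure E,
      sSup {r : ℝ | ∃ f : BoundedContinuousFunction E ℝ, ‖f‖ ≤ 1 ∧ r = |intSM' s ⇑f|}
        = (s.totalVariation Set.univ).toReal) :=
  ⟨intSM'_add, fun c s f => intSM'_smul c s f, fun _ _ => eq_of_forall_intSM'_eq,
    sSup_abs_intSM'_eq_toReal_totalVariation⟩
end

section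
/- Let E be a metric space and let τ_K be the locally convex topology on C_b(E) generated by the seminorms p_{K,μ}(f) = sup_{x∈K} |f(x)| + |∫_E f dμ|, over nonempty compact sets K ⊆ E and μ ∈ ca(E). If τ_K coincides with the sup-norm topology on C_b(E), then E is compact; conversely if E is compact the two topologies coincide. -/
open Filter Topology MeasureTheory

/-- The locally convex topology τ_K on C_b(E), generated by the seminorms
p_{K,μ}(f) = sup_{x∈K}|f(x)| + |∫ f dμ| over nonempty compact K and μ ∈ ca(E):
the initial topology of uniform convergence on each nonempty compact set together with
the integration functionals. -/
noncomputable def tauK (E : Type*) [MetricSpace E] [MeasurableSpace E] [BorelSpace E] :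
    TopologicalSpace (BoundedContinuousFunction E ℝ) :=
  (⨅ (K : Set E) (_ : IsCompact K) (_ : K.Nonempty),
      TopologicalSpace.induced
        (fun f : BoundedContinuousFunction E ℝ => UniformFun.ofFun fun x : K => f x)
        inferInstance) ⊓
    ⨅ s : SignedMeasure E,
      TopologicalSpace.induced (fun f : BoundedContinuousFunction E ℝ => intSM' s ⇑f)
        inferInstance

/-!
Each generator of τ_K is norm-continuous (for the integrals by dominated convergence), and when
E is compact the seminorm for K = E dominates the sup norm. If E is not compact, choose a
sequence (xₙ) without cluster points. The tents at xₙ of slope n have sup norm 1, yet they vanish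
eventually on a neighbourhood of each point, hence on each compact set; being uniformly bounded
they then tend to 0 in τ_K, so τ_K is strictly coarser than the norm topology.
-/

open BoundedContinuousFunction
open scoped NNReal

theorem IsCompact.eventually_forall_of_forall_eventually_prod {X ι : Type*} [TopologicalSpace X]
    {K : Set X} (hK : IsCompact K) {l : Filter ι} {P : ι → X → Prop}
    (hP : ∀ x ∈ K, ∀ᶠ z in l ×ˢ 𝓝 x, P z.1 z.2) : ∀ᶠ i in l, ∀ x ∈ K, P i x :=
  Eventually.curry (hK.mem_prod_nhdsSet_of_forall hP) |>.mono fun _ h => h.self_of_nhdsSet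

theorem exists_seq_forall_not_mapClusterPt {X : Type*} [UniformSpace X]
    [(uniformity X).IsCountablyGenerated] (h : ¬CompactSpace X) :
    ∃ x : ℕ → X, ∀ a, ¬MapClusterPt a atTop x := by
  rw [compactSpace_iff_seqCompactSpace, ← isSeqCompact_univ_iff] at h
  by_contra! H
  refine h (isCountablyCompact_iff_seq_clusterPt.2 fun x _ => ?_).isSeqCompact
  obtain ⟨a, ha⟩ := H x
  exact ⟨a, Set.mem_univ a, ha⟩

section Tent

variable {X : Type*} [PseudoMetricSpace X]

noncomputable def tent (c : X) (k : ℝ≥0) : X →ᵇ ℝ :=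
  .mkOfBound ⟨fun y => max 0 (1 - k * dist y c), by fun_prop⟩ 1 fun y z => by
    have hle (w : X) : max 0 (1 - k * dist w c) ≤ 1 :=
      max_le zero_le_one (sub_le_self 1 (by positivity))
    exact abs_sub_le_of_nonneg_of_le (le_max_left _ _) (hle y) (le_max_left _ _) (hle z)

@[simp]
theorem tent_apply (c : X) (k : ℝ≥0) (y : X) : tent c k y = max 0 (1 - k * dist y c) := rfl

theorem norm_tent (c : X) (k : ℝ≥0) : ‖tent c k‖ = 1 := by
  refine le_antisymm ((norm_le zero_le_one).2 fun y => ?_) ?_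
  · rw [tent_apply, Real.norm_of_nonneg (le_max_left _ _)]
    exact max_le zero_le_one (sub_le_self 1 (by positivity))
  · simpa using (tent c k).norm_coe_le_norm c

theorem tent_eq_zero {c y : X} {k : ℝ≥0} (h : 1 ≤ k * dist y c) : tent c k y = 0 :=
  max_eq_left (by linarith)

theorem eventually_forall_mem_tent_eq_zero {x : ℕ → X} (hx : ∀ a, ¬MapClusterPt a atTop x)
    {K : Set X} (hK : IsCompact K) : ∀ᶠ n in atTop, ∀ y ∈ K, tent (x n) n y = 0 := by
  refine hK.eventually_forall_of_forall_eventually_prod fun a _ => ?_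
  obtain ⟨δ, hδ, hfar⟩ : ∃ δ > 0, ∀ᶠ n in atTop, x n ∉ Metric.ball a δ := by
    simpa [Metric.nhds_basis_ball.mapClusterPt_iff_frequently] using hx a
  have hlarge : ∀ᶠ n : ℕ in atTop, 2 ≤ n * δ :=
    (tendsto_natCast_atTop_atTop.atTop_mul_const hδ).eventually_ge_atTop 2
  filter_upwards [(hfar.and hlarge).prod_mk (Metric.ball_mem_nhds a (half_pos hδ))]
    with ⟨n, y⟩ ⟨⟨hn, hnδ⟩, hy⟩
  simp only [Metric.mem_ball, not_lt] at hn hy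
  have hdist : δ / 2 ≤ dist y (x n) := by linarith [dist_triangle (x n) y a, dist_comm y (x n)]
  refine tent_eq_zero ?_
  calc (1 : ℝ) ≤ n * (δ / 2) := by linarith
    _ ≤ (n : ℝ≥0) * dist y (x n) := by push_cast; gcongr

end Tent

theorem tendsto_intSM' {X ι : Type*} [TopologicalSpace X] [MeasurableSpace X]
    [OpensMeasurableSpace X] (s : SignedMeasure X) {l : Filter ι} [l.IsCountablyGenerated]
    {g : ι → X →ᵇ ℝ} {f : X →ᵇ ℝ} {C : ℝ} (hC : ∀ᶠ i in l, ‖g i‖ ≤ C)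
    (hgf : ∀ x, Tendsto (fun i => g i x) l (𝓝 (f x))) :
    Tendsto (fun i => intSM' s (g i)) l (𝓝 (intSM' s f)) := by
  have key (μ : Measure X) [IsFiniteMeasure μ] :
      Tendsto (fun i => ∫ x, g i x ∂μ) l (𝓝 (∫ x, f x ∂μ)) :=
    tendsto_integral_filter_of_dominated_convergence (fun _ => C)
      (Eventually.of_forall fun i => (g i).continuous.aestronglyMeasurable)
      (hC.mono fun i hi => ae_of_all _ fun x => ((g i).norm_coe_le_norm x).trans hi)
      (integrable_const C) (ae_of_all _ hgf)
  exact (key _).sub (key _)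

section TauK

variable {E : Type*} [MetricSpace E] [MeasurableSpace E] [BorelSpace E] {ι : Type*} {l : Filter ι}

theorem tendsto_nhds_tauK_iff {g : ι → E →ᵇ ℝ} {f : E →ᵇ ℝ} :
    Tendsto g l (@nhds _ (tauK E) f) ↔
      (∀ K : Set E, IsCompact K → K.Nonempty → TendstoUniformlyOn (fun i => ⇑(g i)) f l K) ∧
        ∀ s : SignedMeasure E, Tendsto (fun i => intSM' s (g i)) l (𝓝 (intSM' s f)) := by
  -- `rw [nhds_inf]` cannot unify its implicit topologies, hence the detour through `sInf`.
  rw [tauK, ← sInf_pair, nhds_sInf, iInf_pair, tendsto_inf]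
  simp only [nhds_iInf, nhds_induced, tendsto_iInf, tendsto_comap_iff, Function.comp_def,
    UniformFun.tendsto_iff_tendstoUniformly, tendstoUniformlyOn_iff_tendstoUniformly_comp_coe]
  rfl

theorem tendsto_nhds_tauK_of_tendstoUniformlyOn [l.IsCountablyGenerated] {g : ι → E →ᵇ ℝ}
    {f : E →ᵇ ℝ} {C : ℝ} (hC : ∀ᶠ i in l, ‖g i‖ ≤ C)
    (hK : ∀ K : Set E, IsCompact K → TendstoUniformlyOn (fun i => ⇑(g i)) f l K) :
    Tendsto g l (@nhds _ (tauK E) f) :=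
  tendsto_nhds_tauK_iff.2 ⟨fun K hK' _ => hK K hK', fun s =>
    tendsto_intSM' s hC fun x => (hK {x} isCompact_singleton).tendsto_at rfl⟩

theorem le_tauK : (inferInstance : TopologicalSpace (E →ᵇ ℝ)) ≤ tauK E :=
  le_of_nhds_le_nhds fun f =>
    tendsto_nhds_tauK_of_tendstoUniformlyOn (C := ‖f‖ + 1)
      (tendsto_norm.eventually_le_const (lt_add_one _))
      fun _ _ => (tendsto_iff_tendstoUniformly.1 tendsto_id).tendstoUniformlyOn

theorem tauK_le_of_compactSpace [CompactSpace E] :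
    tauK E ≤ (inferInstance : TopologicalSpace (E →ᵇ ℝ)) := by
  refine le_of_nhds_le_nhds fun f => tendsto_iff_tendstoUniformly.2 ?_
  rcases isEmpty_or_nonempty E with _ | _
  · exact fun _ _ => Eventually.of_forall fun _ x => isEmptyElim x
  · exact tendstoUniformlyOn_univ.1
      ((tendsto_nhds_tauK_iff.1 tendsto_id).1 _ isCompact_univ Set.univ_nonempty)

theorem compactSpace_of_tauK_eq (h : tauK E = (inferInstance : TopologicalSpace (E →ᵇ ℝ))) :
    CompactSpace E := by
  by_contra hE
  obtain ⟨x, hx⟩ := exists_seq_forall_not_mapClusterPt hE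
  have hlim : Tendsto (fun n : ℕ => tent (x n) n) atTop (@nhds _ (tauK E) 0) :=
    tendsto_nhds_tauK_of_tendstoUniformlyOn (Eventually.of_forall fun n => (norm_tent _ _).le)
      fun K hK => (tendsto_const_nhds.tendstoUniformlyOn_const K).congr
        ((eventually_forall_mem_tent_eq_zero hx hK).mono fun n hn y hy => (hn y hy).symm)
  rw [h] at hlim
  simpa [norm_tent] using hlim.norm

end TauK

/-- τ_K coincides with the sup-norm topology on C_b(E) iff E is compact. -/
theorem stmt10 {E : Type*} [MetricSpace E] [MeasurableSpace E] [BorelSpace E] :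
    tauK E = (inferInstance : TopologicalSpace (BoundedContinuousFunction E ℝ)) ↔
      CompactSpace E :=
  ⟨compactSpace_of_tauK_eq, fun _ => le_antisymm tauK_le_of_compactSpace le_tauK⟩
end

section
/- Let E be a metric space. The weak topology σ(C_b(E), ca(E)) coincides with the sup-norm topology on C_b(E) if and only if E is finite. -/
open Filter Topology MeasureTheory

/-- The weak topology σ(C_b(E), ca(E)) on bounded continuous functions, induced by
integration against all finite countably additive signed Borel measures. -/
noncomputable def tauSigma (E : Type*) [MetricSpace E] [MeasurableSpace E] [BorelSpace E] :
    TopologicalSpace (BoundedContinuousFunction E ℝ) :=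
  ⨅ s : SignedMeasure E,
    TopologicalSpace.induced (fun f : BoundedContinuousFunction E ℝ => intSM' s ⇑f)
      inferInstance

section Aux

set_option linter.unusedSectionVars false

variable {E : Type*} [MetricSpace E] [MeasurableSpace E] [BorelSpace E]

/-- `intSM'` as a linear map on bounded continuous functions. -/
noncomputable def intL (s : SignedMeasure E) :
    BoundedContinuousFunction E ℝ →ₗ[ℝ] ℝ where
  toFun f := intSM' s ⇑f
  map_add' f g := by
    simp only [intSM', BoundedContinuousFunction.coe_add, Pi.add_apply]
    rw [integral_add (f.integrable _) (g.integrable _),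
      integral_add (f.integrable _) (g.integrable _)]
    ring
  map_smul' c f := by
    simp only [intSM', BoundedContinuousFunction.coe_smul, Pi.smul_apply, smul_eq_mul,
      RingHom.id_apply]
    rw [show (fun x => c * f x) = fun x => c • f x from rfl, integral_smul, integral_smul]
    simp [mul_sub]

lemma intL_zero (s : SignedMeasure E) :
    intSM' s ⇑(0 : BoundedContinuousFunction E ℝ) = 0 := by
  simp [intSM']

lemma intL_continuous (s : SignedMeasure E) :
    Continuous fun f : BoundedContinuousFunction E ℝ => intSM' s ⇑f := by
  set μp := s.toJordanDecomposition.posPart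
  set μn := s.toJordanDecomposition.negPart
  have key : ∀ h : BoundedContinuousFunction E ℝ,
      |intSM' s ⇑h| ≤ ((μp Set.univ).toReal + (μn Set.univ).toReal) * ‖h‖ := by
    intro h
    have h1 := h.norm_integral_le_mul_norm μp
    have h2 := h.norm_integral_le_mul_norm μn
    calc |intSM' s ⇑h| ≤ ‖∫ x, h x ∂μp‖ + ‖∫ x, h x ∂μn‖ := abs_sub _ _
      _ ≤ (μp Set.univ).toReal * ‖h‖ + (μn Set.univ).toReal * ‖h‖ := add_le_add h1 h2
      _ = ((μp Set.univ).toReal + (μn Set.univ).toReal) * ‖h‖ := by ring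
  have hL : LipschitzWith (((μp Set.univ).toReal + (μn Set.univ).toReal).toNNReal)
      (fun f : BoundedContinuousFunction E ℝ => intSM' s ⇑f) := by
    apply LipschitzWith.of_dist_le_mul
    intro f g
    have h1 : intSM' s ⇑f - intSM' s ⇑g = intSM' s ⇑(f - g) := (map_sub (intL s) f g).symm
    rw [Real.dist_eq, h1, dist_eq_norm]
    calc |intSM' s ⇑(f - g)| ≤ ((μp Set.univ).toReal + (μn Set.univ).toReal) * ‖f - g‖ :=
        key _
      _ ≤ _ := by
        apply mul_le_mul_of_nonneg_right _ (norm_nonneg _)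
        exact (Real.coe_toNNReal _ (by positivity)).ge
  exact hL.continuous

lemma intSM'_toSignedMeasure (μ : Measure E) [IsFiniteMeasure μ] (f : E → ℝ) :
    intSM' μ.toSignedMeasure f = ∫ x, f x ∂μ := by
  have hj : μ.toSignedMeasure.toJordanDecomposition
      = ⟨μ, 0, MeasureTheory.Measure.MutuallySingular.zero_right⟩ := by
    have : (⟨μ, 0, MeasureTheory.Measure.MutuallySingular.zero_right⟩ :
        JordanDecomposition E).toSignedMeasure = μ.toSignedMeasure := by
      simp [JordanDecomposition.toSignedMeasure]
    rw [← this, JordanDecomposition.toJordanDecomposition_toSignedMeasure]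
  rw [intSM', hj]
  simp

lemma intSM'_dirac (x : E) (f : BoundedContinuousFunction E ℝ) :
    intSM' (MeasureTheory.Measure.dirac x).toSignedMeasure ⇑f = f x := by
  rw [intSM'_toSignedMeasure]
  exact integral_dirac' _ _ f.continuous.stronglyMeasurable

lemma nhds_tauSigma (f : BoundedContinuousFunction E ℝ) :
    @nhds _ (tauSigma E) f =
      ⨅ s : SignedMeasure E,
        Filter.comap (fun g : BoundedContinuousFunction E ℝ => intSM' s ⇑g)
          (nhds (intSM' s ⇑f)) := by
  rw [tauSigma, _root_.nhds_iInf]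
  exact iInf_congr fun s => nhds_induced _ _

/-- A bump function: equals 1 at `x0` and vanishes at distance `≥ r`. -/
lemma bump_exists (x0 : E) {r : ℝ} (hr : 0 < r) :
    ∃ f : BoundedContinuousFunction E ℝ, f x0 = 1 ∧ ∀ x, r ≤ dist x x0 → f x = 0 := by
  have hle : ∀ x : E, 0 ≤ max 0 (1 - dist x x0 / r) ∧ max 0 (1 - dist x x0 / r) ≤ 1 := by
    intro x
    refine ⟨le_max_left _ _, max_le zero_le_one ?_⟩
    have : 0 ≤ dist x x0 / r := by positivity
    linarith
  refine ⟨BoundedContinuousFunction.mkOfBound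
      ⟨fun x => max 0 (1 - dist x x0 / r), by fun_prop⟩ 2 ?_, ?_, ?_⟩
  · intro x y
    simp only [ContinuousMap.coe_mk]
    rw [Real.dist_eq, abs_sub_le_iff]
    constructor
    · have := (hle x).2; have := (hle y).1; linarith
    · have := (hle y).2; have := (hle x).1; linarith
  · simp
  · intro x hx
    simp only [BoundedContinuousFunction.mkOfBound_coe, ContinuousMap.coe_mk]
    have : (1 : ℝ) ≤ dist x x0 / r := (one_le_div hr).mpr hx
    rw [max_eq_left]
    linarith

end Aux

/-- The weak topology σ(C_b(E), ca(E)) coincides with the sup-norm topology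
on C_b(E) iff the metric space E is finite. -/
theorem stmt11 {E : Type*} [MetricSpace E] [MeasurableSpace E] [BorelSpace E] :
    tauSigma E = (inferInstance : TopologicalSpace (BoundedContinuousFunction E ℝ)) ↔
      Finite E := by
  classical
  constructor
  · -- if the topologies agree then `E` is finite
    intro h
    by_contra hfin
    have hinf : Infinite E := not_finite_iff_infinite.mp hfin
    set B : Set (BoundedContinuousFunction E ℝ) := Metric.ball 0 1 with hBdef
    have hB : B ∈ @nhds _ (tauSigma E) 0 := by
      rw [h]; exact Metric.ball_mem_nhds 0 one_pos
    rw [nhds_tauSigma] at hB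
    rcases Filter.mem_iInf.mp hB with ⟨I, Ifin, V, hV, hBeq⟩
    haveI : Fintype I := Ifin.fintype
    set n := Fintype.card I with hn
    -- choose `n + 2` distinct points
    set p : Fin (n + 2) → E := fun j => Infinite.natEmbedding E j with hp
    have hpinj : Function.Injective p := fun a b hab => by
      have := (Infinite.natEmbedding E).injective hab
      exact Fin.val_injective this
    -- a positive lower bound on pairwise distances
    obtain ⟨r, hr0, hrle⟩ : ∃ r > 0, ∀ i j, i ≠ j → r ≤ dist (p i) (p j) := by
      set pairs : Finset (Fin (n + 2) × Fin (n + 2)) :=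
        Finset.univ.filter fun q => q.1 ≠ q.2 with hpairs
      set S : Finset ℝ := pairs.image fun q => dist (p q.1) (p q.2) with hS
      have h01 : ((0 : Fin (n + 2)), (1 : Fin (n + 2))) ∈ pairs := by
        simp [hpairs, Fin.ext_iff]
      have hSne : S.Nonempty := ⟨dist (p 0) (p 1), Finset.mem_image.mpr ⟨_, h01, rfl⟩⟩
      refine ⟨S.min' hSne, ?_, ?_⟩
      · rw [gt_iff_lt, Finset.lt_min'_iff]
        intro y hy
        rcases Finset.mem_image.mp hy with ⟨q, hq, rfl⟩
        have hne : q.1 ≠ q.2 := by simpa [hpairs] using hq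
        exact dist_pos.mpr fun hh => hne (hpinj hh)
      · intro i j hij
        exact Finset.min'_le _ _ (Finset.mem_image.mpr
          ⟨(i, j), by simp [hpairs, hij], rfl⟩)
    -- bump functions at the chosen points
    choose f hf1 hf2 using fun j : Fin (n + 2) => bump_exists (p j) hr0
    -- the matrix of integrals and a nonzero kernel vector
    set A : Matrix I (Fin (n + 2)) ℝ := fun i j => intL (i : SignedMeasure E) (f j) with hA
    have hTnotinj : ¬ Function.Injective A.mulVecLin := by
      intro hinj
      have h1 := LinearMap.finrank_le_finrank_of_injective hinj
      simp only [Module.finrank_fintype_fun_eq_card, Fintype.card_fin] at h1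
      omega
    obtain ⟨a, b, hTab, hab⟩ := Function.not_injective_iff.mp hTnotinj
    obtain ⟨j0, hj0⟩ := Function.ne_iff.mp (sub_ne_zero.mpr hab)
    set c : Fin (n + 2) → ℝ := (2 / (a - b) j0) • (a - b) with hc
    have hTc : A.mulVecLin c = 0 := by
      rw [hc, _root_.map_smul, map_sub, hTab, sub_self, smul_zero]
    have hne0 : a j0 - b j0 ≠ 0 := by simpa using hj0
    have hcj0 : c j0 = 2 := by
      simp only [hc, Pi.smul_apply, Pi.sub_apply, smul_eq_mul]
      rw [div_mul_eq_mul_div, mul_div_assoc, div_self hne0, mul_one]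
    set g : BoundedContinuousFunction E ℝ := ∑ j, c j • f j with hg
    -- g has all the integrals zero
    have hgint : ∀ i : I, intSM' (i : SignedMeasure E) ⇑g = 0 := by
      intro i
      have h1 : intL (i : SignedMeasure E) g = ∑ j, A i j * c j := by
        rw [hg, map_sum]
        refine Finset.sum_congr rfl fun j _ => ?_
        rw [_root_.map_smul, smul_eq_mul, mul_comm]
      have h2 : A.mulVec c i = 0 := by
        have := congrFun hTc i
        simpa [Matrix.mulVecLin_apply] using this
      rw [Matrix.mulVec, dotProduct] at h2
      calc intSM' (i : SignedMeasure E) ⇑g = intL (i : SignedMeasure E) g := rfl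
        _ = ∑ j, A i j * c j := h1
        _ = 0 := h2
    -- but g evaluates to 2 at p j0
    have hgval : g (p j0) = 2 := by
      have : g (p j0) = ∑ j, c j * f j (p j0) := by
        rw [hg]
        simp [BoundedContinuousFunction.coe_sum, Finset.sum_apply]
      rw [this, Finset.sum_eq_single j0]
      · rw [hf1 j0, mul_one, hcj0]
      · intro j _ hj
        rw [hf2 j (p j0) (hrle j0 j fun hh => hj (hpinj (congrArg p hh)).symm), mul_zero]
      · intro hmem; exact absurd (Finset.mem_univ j0) hmem
    -- g belongs to B, hence ‖g‖ < 1, contradiction with g (p j0) = 2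
    have hgB : g ∈ B := by
      rw [hBeq, Set.mem_iInter]
      intro i
      obtain ⟨U, hU, hsub⟩ := Filter.mem_comap.mp (hV i)
      apply hsub
      have heq : intSM' (i : SignedMeasure E) ⇑g
          = intSM' (i : SignedMeasure E) ⇑(0 : BoundedContinuousFunction E ℝ) := by
        rw [intL_zero, hgint i]
      simp only [Set.mem_preimage, heq]
      exact mem_of_mem_nhds hU
    have hlt : ‖g‖ < 1 := by
      have := Metric.mem_ball.mp hgB
      rwa [dist_zero_right] at this
    have hge : (2 : ℝ) ≤ ‖g‖ := by
      have := g.norm_coe_le_norm (p j0)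
      rwa [hgval, Real.norm_ofNat] at this
    linarith
  · -- if `E` is finite then the two topologies agree
    intro hfin
    apply le_antisymm
    · -- tauSigma is finer than the norm topology (using Dirac measures)
      refine le_of_nhds_le_nhds fun f => ?_
      refine Metric.nhds_basis_ball.ge_iff.mpr fun ε hε => ?_
      rw [nhds_tauSigma]
      have hsub : (⋂ x : E,
          (fun g : BoundedContinuousFunction E ℝ =>
            intSM' (MeasureTheory.Measure.dirac x).toSignedMeasure ⇑g) ⁻¹'
            Metric.ball (intSM' (MeasureTheory.Measure.dirac x).toSignedMeasure ⇑f) (ε / 2))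
          ⊆ Metric.ball f ε := by
        intro g hg
        rw [Set.mem_iInter] at hg
        rw [Metric.mem_ball]
        have hdle : dist g f ≤ ε / 2 := by
          rw [BoundedContinuousFunction.dist_le (by positivity)]
          intro x
          have := hg x
          simp only [Set.mem_preimage, Metric.mem_ball, intSM'_dirac] at this
          exact this.le
        linarith
      refine Filter.mem_of_superset (Filter.iInter_mem.mpr fun x => ?_) hsub
      exact Filter.mem_iInf_of_mem ((MeasureTheory.Measure.dirac x).toSignedMeasure)
        (Filter.preimage_mem_comap (Metric.ball_mem_nhds _ (by positivity)))
    · -- the norm topology is finer than tauSigma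
      exact le_iInf fun s => continuous_iff_le_induced.mp (intL_continuous s)
end

section
/- Let E be a metric space which is not complete. Then there exists a bounded continuous real-valued function on E which is not uniformly continuous, i.e., UC_b(E) ≠ C_b(E). -/
/-!
A point `p` of the completion outside `E` is the limit of points of `E` whose distances to `p`
strictly decrease. The even- and odd-indexed terms of such a sequence form two disjoint sets,
closed in `E` because their only accumulation point `p` lies outside `E`, while the two sequences
come arbitrarily close to each other. An Urysohn function separating the two sets takes values
in `[0, 1]`, is `0` on one and `1` on the other, and so cannot be uniformly continuous.
-/

open Filter Topology Set Function UniformSpace Uniformity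

theorem not_uniformContinuous_of_tendsto_uniformity {α β γ : Type*} [UniformSpace α]
    [UniformSpace β] [T0Space β] {l : Filter γ} [l.NeBot] {x y : γ → α}
    (hxy : Tendsto (fun n => (x n, y n)) l (𝓤 α)) {f : α → β} {a b : β}
    (hx : ∀ n, f (x n) = a) (hy : ∀ n, f (y n) = b) (hab : a ≠ b) :
    ¬ UniformContinuous f := fun hf =>
  hab <| eq_of_uniformity fun hV => by
    obtain ⟨n, hn⟩ := ((Tendsto.comp hf hxy).eventually_mem hV).exists
    rwa [comp_apply, hx, hy] at hn

theorem IsUniformInducing.tendsto_uniformity_of_tendsto_nhds {α β γ : Type*} [UniformSpace α]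
    [UniformSpace β] {ι : α → β} (hι : IsUniformInducing ι) {l : Filter γ} {x y : γ → α} {p : β}
    (hx : Tendsto (ι ∘ x) l (𝓝 p)) (hy : Tendsto (ι ∘ y) l (𝓝 p)) :
    Tendsto (fun n => (x n, y n)) l (𝓤 α) := by
  rw [← hι.comap_uniformity, tendsto_comap_iff]
  exact (hx.prodMk_nhds hy).mono_right (nhds_le_uniformity p)

theorem isClosed_range_of_tendsto_notMem_range {α β : Type*} [TopologicalSpace α]
    [TopologicalSpace β] [T2Space β] {ι : α → β} (hι : Continuous ι) (hinj : Injective ι)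
    {x : ℕ → α} {p : β} (hx : Tendsto (ι ∘ x) atTop (𝓝 p)) (hp : p ∉ range ι) :
    IsClosed (range x) := by
  have hpre : range x = ι ⁻¹' insert p (range (ι ∘ x)) := by
    ext e
    simp only [mem_preimage, mem_insert_iff, mem_range, comp_apply, hinj.eq_iff]
    exact ⟨fun he => Or.inr he, fun he => he.resolve_left fun hep => hp ⟨e, hep⟩⟩
  rw [hpre]
  exact hx.isCompact_insert_range.isClosed.preimage hι

theorem exists_seq_strictAnti_dist_tendsto {α β : Type*} [MetricSpace β] {g : α → β}
    {p : β} (hpg : p ∈ closure (range g)) (hp : p ∉ range g) :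
    ∃ x : ℕ → α, StrictAnti (fun n => dist (g (x n)) p) ∧ Tendsto (g ∘ x) atTop (𝓝 p) := by
  have hglb : IsGLB (range fun a => dist (g a) p) 0 := by
    refine ⟨forall_mem_range.2 fun _ => dist_nonneg, fun b hb => le_of_not_gt fun hb0 => ?_⟩
    obtain ⟨a, ha⟩ := Metric.mem_closure_range_iff.1 hpg b hb0
    exact (hb ⟨a, dist_comm (g a) p⟩).not_gt ha
  have hzero : (0 : ℝ) ∉ range fun a => dist (g a) p := fun ⟨a, ha⟩ =>
    hp ⟨a, dist_eq_zero.1 (by exact ha)⟩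
  obtain ⟨_, a, -⟩ := closure_nonempty_iff.1 ⟨p, hpg⟩
  obtain ⟨v, hanti, -, hv, hvg⟩ := hglb.exists_seq_strictAnti_tendsto_of_notMem hzero ⟨_, a, rfl⟩
  choose x hx using hvg
  refine ⟨x, ?_, tendsto_iff_dist_tendsto_zero.2 ?_⟩ <;> simpa only [comp_apply, hx]

theorem exists_isClosed_disjoint_ranges_tendsto_uniformity {E : Type*} [MetricSpace E]
    (h : ¬ CompleteSpace E) :
    ∃ x y : ℕ → E, IsClosed (range x) ∧ IsClosed (range y) ∧ Disjoint (range x) (range y) ∧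
      Tendsto (fun n => (x n, y n)) atTop (𝓤 E) := by
  obtain ⟨p, hp⟩ : ∃ p : Completion E, p ∉ range ((↑) : E → Completion E) := by
    by_contra! hsurj
    exact h (((Completion.isUniformInducing_coe E).completeSpace_congr hsurj).2 inferInstance)
  obtain ⟨x, hanti, hx⟩ := exists_seq_strictAnti_dist_tendsto (Completion.denseRange_coe p) hp
  have hsub : ∀ k : ℕ, Tendsto (fun n => 2 * n + k) atTop atTop := fun k =>
    tendsto_atTop_mono (fun n => by dsimp only [id]; omega) tendsto_id
  refine ⟨x ∘ (2 * ·), x ∘ (2 * · + 1), ?_, ?_, ?_, ?_⟩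
  · exact isClosed_range_of_tendsto_notMem_range (Completion.continuous_coe E)
      (Completion.coe_injective E) (hx.comp (hsub 0)) hp
  · exact isClosed_range_of_tendsto_notMem_range (Completion.continuous_coe E)
      (Completion.coe_injective E) (hx.comp (hsub 1)) hp
  · refine disjoint_range_iff.2 fun m n hmn => ?_
    have := hanti.injective (congrArg (fun e : E => dist (e : Completion E) p) hmn)
    dsimp only at this
    omega
  · exact (Completion.isUniformInducing_coe E).tendsto_uniformity_of_tendsto_nhds
      (hx.comp (hsub 0)) (hx.comp (hsub 1))

/-- On a non-complete metric space there exists a bounded continuous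
real-valued function which is not uniformly continuous. -/
theorem stmt13 {E : Type*} [MetricSpace E] (h : ¬ CompleteSpace E) :
    ∃ f : BoundedContinuousFunction E ℝ, ¬ UniformContinuous ⇑f := by
  obtain ⟨x, y, hx, hy, hxy, hclose⟩ := exists_isClosed_disjoint_ranges_tendsto_uniformity h
  obtain ⟨f, hf₀, hf₁, hf⟩ := exists_continuous_zero_one_of_isClosed hx hy hxy
  refine ⟨.mkOfBound f 1 fun a b => Real.dist_le_of_mem_Icc_01 (hf a) (hf b), ?_⟩
  exact not_uniformContinuous_of_tendsto_uniformity hclose (fun n => hf₀ ⟨n, rfl⟩)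
    (fun n => hf₁ ⟨n, rfl⟩) zero_ne_one
end

section
/- Let E be a metric space homeomorphic to a Borel subset of a Polish space. Then UC_b(E) is dense in C_b(E) with respect to the topology τ_K generated by the seminorms p_{K,μ}(f) = sup_{x∈K}|f(x)| + |∫_E f dμ| (K ⊆ E compact, μ ∈ ca(E)). -/
/-!
Every finite Borel measure on `E` is tight: push it forward to the Polish space, where finite
measures are inner regular, and pull compact subsets of `B` back along the embedding.

The sets `{g | sup_K |g - f| < ε, ∫ |g - f| dμ < ε}` (`K` compact, `μ` finite) form a filter
finer than the `τ_K`-neighbourhood filter of `f`, because `|∫ (g - f) ds| ≤ ∫ |g - f| d|s|`.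
To meet such a set, take a compact `C` with `μ Cᶜ` small; the inf-convolution
`x ↦ ⨅ y ∈ K ∪ C, f y + n * dist x y`, truncated at `‖f‖`, is Lipschitz, bounded by `‖f‖`, and
close to `f` on `K ∪ C` once `n` is large.
-/

open Filter Topology MeasureTheory

theorem MeasureTheory.Measure.InnerRegular.of_map_of_isInducing {α β : Type*}
    [MeasurableSpace α] [TopologicalSpace α] [MeasurableSpace β] [TopologicalSpace β]
    {μ : Measure α} {φ : α → β} (hm : MeasurableEmbedding φ) (ht : IsInducing φ)
    [(μ.map φ).InnerRegular] : μ.InnerRegular := by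
  rw [← hm.comap_map μ]
  exact ⟨InnerRegular.innerRegular.comap hm (fun _ hU => hm.measurableSet_image' hU)
    fun _ hK hc => ht.isCompact_preimage' hc hK⟩

theorem isTightMeasureSet_singleton_of_homeomorph_measurableSet {E : Type*} [TopologicalSpace E]
    [MeasurableSpace E] [BorelSpace E] {P : Type*} [TopologicalSpace P] [PolishSpace P]
    [MeasurableSpace P] [BorelSpace P] {B : Set P} (hB : MeasurableSet B) (e : E ≃ₜ B)
    (μ : Measure E) [IsFiniteMeasure μ] : IsTightMeasureSet {μ} := by
  let φ : E → P := Subtype.val ∘ e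
  have hm : MeasurableEmbedding φ :=
    (MeasurableEmbedding.subtype_coe hB).comp e.measurableEmbedding
  have hφ : IsEmbedding φ := IsEmbedding.subtypeVal.comp e.isEmbedding
  have : T2Space E := hφ.t2Space
  have := Measure.InnerRegular.of_map_of_isInducing hm hφ.isInducing (μ := μ)
  exact isTightMeasureSet_singleton_of_innerRegular

section LipschitzEnvelope

open Set

variable {E : Type*} [PseudoMetricSpace E]

noncomputable def lipschitzEnvelope (f : E → ℝ) (C : Set E) (n : NNReal) (x : E) : ℝ :=
  ⨅ y : C, f y + n * dist x y

variable {f : E → ℝ} {C : Set E} {n : NNReal}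

lemma bddBelow_range_add_mul_dist (hf : BddBelow (f '' C)) (x : E) :
    BddBelow (range fun y : C => f y + n * dist x y) := by
  obtain ⟨m, hm⟩ := hf
  refine ⟨m, ?_⟩
  rintro _ ⟨y, rfl⟩
  have := hm (mem_image_of_mem f y.2)
  have : 0 ≤ (n : ℝ) * dist x y := by positivity
  linarith

lemma lipschitzEnvelope_le (hf : BddBelow (f '' C)) {x : E} (hx : x ∈ C) :
    lipschitzEnvelope f C n x ≤ f x := by
  simpa [lipschitzEnvelope] using ciInf_le (bddBelow_range_add_mul_dist hf x) ⟨x, hx⟩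

lemma le_lipschitzEnvelope (hC : C.Nonempty) {a : ℝ} {x : E}
    (h : ∀ y ∈ C, a ≤ f y + n * dist x y) : a ≤ lipschitzEnvelope f C n x :=
  have := hC.to_subtype
  le_ciInf fun y => h y y.2

lemma lipschitzWith_lipschitzEnvelope (hC : C.Nonempty) (hf : BddBelow (f '' C)) :
    LipschitzWith n (lipschitzEnvelope f C n) := by
  refine LipschitzWith.of_le_add_mul n fun x x' => ?_
  rw [← sub_le_iff_le_add]
  refine le_lipschitzEnvelope hC fun y hy => ?_
  have h₁ := ciInf_le (bddBelow_range_add_mul_dist (n := n) hf x) ⟨y, hy⟩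
  have h₂ : (n : ℝ) * dist x y ≤ n * dist x' y + n * dist x x' := by
    rw [← mul_add, add_comm]; gcongr; exact dist_triangle _ _ _
  simp only [lipschitzEnvelope] at h₁ ⊢
  linarith

lemma sub_le_lipschitzEnvelope {M δ ε : ℝ} (hfM : ∀ y ∈ C, |f y| ≤ M) (hnδ : 2 * M ≤ n * δ)
    (hε : 0 ≤ ε) {x : E} (hx : x ∈ C) (hfδ : ∀ y ∈ C, dist x y < δ → dist (f x) (f y) < ε) :
    f x - ε ≤ lipschitzEnvelope f C n x := by
  refine le_lipschitzEnvelope ⟨x, hx⟩ fun y hy => ?_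
  have : 0 ≤ (n : ℝ) * dist x y := by positivity
  by_cases hxy : dist x y < δ
  · have := hfδ y hy hxy
    rw [Real.dist_eq] at this
    linarith [(abs_lt.mp this).2]
  · have : (n : ℝ) * δ ≤ n * dist x y := by gcongr; exact not_lt.mp hxy
    linarith [abs_le.mp (hfM x hx), abs_le.mp (hfM y hy)]

end LipschitzEnvelope

theorem BoundedContinuousFunction.exists_uniformContinuous_norm_le_dist_le
    {E : Type*} [MetricSpace E] (f : BoundedContinuousFunction E ℝ) {C : Set E}
    (hC : IsCompact C) {ε : ℝ} (hε : 0 < ε) :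
    ∃ g : BoundedContinuousFunction E ℝ, UniformContinuous g ∧ ‖g‖ ≤ ‖f‖ ∧
      ∀ x ∈ C, dist (g x) (f x) ≤ ε := by
  rcases C.eq_empty_or_nonempty with rfl | hCne
  · exact ⟨0, uniformContinuous_const, by simp, by simp⟩
  obtain ⟨δ, hδ, hfδ⟩ := Metric.uniformContinuousOn_iff.mp
    (hC.uniformContinuousOn_of_continuous f.continuous.continuousOn) ε hε
  set M := ‖f‖
  have hfM : ∀ x, |f x| ≤ M := fun x => by simpa using f.norm_coe_le_norm x
  have hfC : BddBelow (f '' C) := ⟨-M, by rintro _ ⟨x, -, rfl⟩; exact (abs_le.mp (hfM x)).1⟩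
  -- slope `n` so that `n * δ = 2 * M`: far from `y` the cone `f y + n * dist x y` exceeds `M`
  set n := (2 * M / δ).toNNReal
  have hnδ : (n : ℝ) * δ = 2 * M := by
    rw [Real.coe_toNNReal _ (by positivity), div_mul_cancel₀ _ hδ.ne']
  set g₀ := lipschitzEnvelope f C n
  have hg₀ : LipschitzWith n g₀ := lipschitzWith_lipschitzEnvelope hCne hfC
  have hg₀_ge : ∀ x, -M ≤ g₀ x := fun x => le_lipschitzEnvelope hCne fun y _ => by
    have : 0 ≤ (n : ℝ) * dist x y := by positivity
    linarith [(abs_le.mp (hfM y)).1]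
  have hg₀_le : ∀ x ∈ C, g₀ x ≤ f x := fun x hx => lipschitzEnvelope_le hfC hx
  have hg₀_approx : ∀ x ∈ C, f x - ε ≤ g₀ x := fun x hx =>
    sub_le_lipschitzEnvelope (fun y _ => hfM y) hnδ.ge hε.le hx (hfδ x hx)
  have hbound : ∀ x, ‖min (g₀ x) M‖ ≤ M := fun x => by
    rw [Real.norm_eq_abs, abs_le]
    exact ⟨le_min (hg₀_ge x) (by linarith [norm_nonneg f]), min_le_right _ _⟩
  refine ⟨.ofNormedAddCommGroup _ (hg₀.min_const M).continuous M hbound,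
    (hg₀.min_const M).uniformContinuous, norm_ofNormedAddCommGroup_le _ (norm_nonneg f) hbound,
    fun x hx => ?_⟩
  have hmin : min (g₀ x) M = g₀ x := min_eq_left ((hg₀_le x hx).trans (abs_le.mp (hfM x)).2)
  simp only [BoundedContinuousFunction.coe_ofNormedAddCommGroup, hmin, Real.dist_eq, abs_le]
  constructor <;> linarith [hg₀_le x hx, hg₀_approx x hx]

section Integral

variable {X : Type*} [TopologicalSpace X] [MeasurableSpace X] [OpensMeasurableSpace X]

lemma BoundedContinuousFunction.integrable_dist (μ : Measure X) [IsFiniteMeasure μ]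
    (g f : BoundedContinuousFunction X ℝ) : Integrable (fun x => dist (g x) (f x)) μ := by
  simpa only [Real.dist_eq, Pi.sub_apply] using ((g.integrable μ).sub (f.integrable μ)).abs

lemma dist_intSM'_le (s : SignedMeasure X) (g f : BoundedContinuousFunction X ℝ) :
    dist (intSM' s g) (intSM' s f) ≤ ∫ x, dist (g x) (f x) ∂s.totalVariation := by
  set p := s.toJordanDecomposition.posPart
  set q := s.toJordanDecomposition.negPart
  have hdiff : ∀ ν : Measure X, [IsFiniteMeasure ν] →
      |(∫ x, g x ∂ν) - ∫ x, f x ∂ν| ≤ ∫ x, dist (g x) (f x) ∂ν := fun ν _ => by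
    rw [← integral_sub (g.integrable ν) (f.integrable ν)]
    simpa only [Real.dist_eq] using abs_integral_le_integral_abs
  rw [SignedMeasure.totalVariation, integral_add_measure (g.integrable_dist p f)
    (g.integrable_dist q f), Real.dist_eq, intSM', intSM']
  calc |(∫ x, g x ∂p) - (∫ x, g x ∂q) - ((∫ x, f x ∂p) - ∫ x, f x ∂q)|
      = |((∫ x, g x ∂p) - ∫ x, f x ∂p) - ((∫ x, g x ∂q) - ∫ x, f x ∂q)| := by ring_nf
    _ ≤ |(∫ x, g x ∂p) - ∫ x, f x ∂p| + |(∫ x, g x ∂q) - ∫ x, f x ∂q| := abs_sub _ _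
    _ ≤ _ := add_le_add (hdiff p) (hdiff q)

lemma integral_dist_le_of_dist_le_on (μ : Measure X) [IsFiniteMeasure μ]
    {g f : BoundedContinuousFunction X ℝ} (hgf : ‖g‖ ≤ ‖f‖) {C : Set X} (hC : MeasurableSet C)
    {η : ℝ} (hgC : ∀ x ∈ C, dist (g x) (f x) ≤ η) :
    ∫ x, dist (g x) (f x) ∂μ ≤ η * μ.real C + 2 * ‖f‖ * μ.real Cᶜ := by
  have hset : ∀ {A : Set X} {c : ℝ}, (∀ x ∈ A, dist (g x) (f x) ≤ c) →
      ∫ x in A, dist (g x) (f x) ∂μ ≤ c * μ.real A := fun hA =>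
    (le_abs_self _).trans <| by
      simpa only [Real.norm_eq_abs] using norm_setIntegral_le_of_norm_le_const
        (f := fun x => dist (g x) (f x)) (measure_lt_top μ _)
        fun x hx => abs_dist.trans_le (hA x hx)
  have hfar : ∀ x, dist (g x) (f x) ≤ 2 * ‖f‖ := fun x => calc
    dist (g x) (f x) ≤ ‖g x‖ + ‖f x‖ := dist_le_norm_add_norm _ _
    _ ≤ ‖g‖ + ‖f‖ := add_le_add (g.norm_coe_le_norm x) (f.norm_coe_le_norm x)
    _ ≤ 2 * ‖f‖ := by linarith
  rw [← integral_add_compl hC (g.integrable_dist μ f)]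
  exact add_le_add (hset hgC) (hset fun x _ => hfar x)

end Integral

section CompactIntegralBall

open Set

variable {X : Type*} [MetricSpace X] [MeasurableSpace X] [OpensMeasurableSpace X]

def compactIntegralBall (f : BoundedContinuousFunction X ℝ) (K : Set X) (μ : Measure X) (ε : ℝ) :
    Set (BoundedContinuousFunction X ℝ) :=
  {g | (∀ x ∈ K, dist (g x) (f x) < ε) ∧ ∫ x, dist (g x) (f x) ∂μ < ε}

theorem BoundedContinuousFunction.exists_uniformContinuous_mem_compactIntegralBall
    (f : BoundedContinuousFunction X ℝ) {K : Set X} (hK : IsCompact K)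
    {μ : Measure X} [IsFiniteMeasure μ] (hμ : IsTightMeasureSet {μ}) {ε : ℝ} (hε : 0 < ε) :
    ∃ g : BoundedContinuousFunction X ℝ, UniformContinuous g ∧ g ∈ compactIntegralBall f K μ ε := by
  set A := μ.real univ + 2 * ‖f‖
  have hA : 0 ≤ A := by positivity
  set η := ε / (A + 2)
  have hη : 0 < η := by positivity
  have hηA : η * (A + 2) = ε := div_mul_cancel₀ _ (by positivity)
  obtain ⟨C, hC, hCμ⟩ := isTightMeasureSet_iff_exists_isCompact_measure_compl_le.mp hμ
    (ENNReal.ofReal η) (by simpa using hη)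
  have hμC : μ.real Cᶜ ≤ η := ENNReal.toReal_le_of_le_ofReal hη.le (hCμ μ rfl)
  obtain ⟨g, hgUC, hgf, hgKC⟩ := f.exists_uniformContinuous_norm_le_dist_le (hK.union hC) hη
  refine ⟨g, hgUC, fun x hx => (hgKC x (Or.inl hx)).trans_lt (by nlinarith), ?_⟩
  calc ∫ x, dist (g x) (f x) ∂μ
      ≤ η * μ.real C + 2 * ‖f‖ * μ.real Cᶜ := integral_dist_le_of_dist_le_on μ hgf
        hC.isClosed.measurableSet fun x hx => hgKC x (Or.inr hx)
    _ ≤ η * μ.real univ + 2 * ‖f‖ * η := by gcongr; exacts [measure_ne_top μ univ, subset_univ C]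
    _ < ε := by nlinarith

lemma compactIntegralBall_anti {f : BoundedContinuousFunction X ℝ} {K K' : Set X}
    {μ μ' : Measure X} [IsFiniteMeasure μ'] {ε ε' : ℝ} (hK : K ⊆ K') (hμ : μ ≤ μ')
    (hε : ε' ≤ ε) : compactIntegralBall f K' μ' ε' ⊆ compactIntegralBall f K μ ε :=
  fun g ⟨hgK, hgμ⟩ => ⟨fun x hx => (hgK x (hK hx)).trans_le hε,
    ((integral_mono_measure hμ (.of_forall fun _ => dist_nonneg)
      (g.integrable_dist μ' f)).trans_lt hgμ).trans_le hε⟩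

variable (f : BoundedContinuousFunction X ℝ)

def compactIntegralNhds : Filter (BoundedContinuousFunction X ℝ) where
  sets := {U | ∃ K, IsCompact K ∧ ∃ μ : Measure X, IsFiniteMeasure μ ∧ ∃ ε > 0,
    compactIntegralBall f K μ ε ⊆ U}
  univ_sets := ⟨∅, isCompact_empty, 0, inferInstance, 1, one_pos, subset_univ _⟩
  sets_of_superset := fun ⟨K, hK, μ, hμ, ε, hε, hU⟩ hUV => ⟨K, hK, μ, hμ, ε, hε, hU.trans hUV⟩
  inter_sets := by
    rintro U V ⟨K, hK, μ, hμ, ε, hε, hU⟩ ⟨K', hK', μ', hμ', ε', hε', hV⟩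
    refine ⟨K ∪ K', hK.union hK', μ + μ', inferInstance, min ε ε', lt_min hε hε',
      subset_inter (.trans ?_ hU) (.trans ?_ hV)⟩
    · exact compactIntegralBall_anti subset_union_left (Measure.le_add_right le_rfl)
        (min_le_left _ _)
    · exact compactIntegralBall_anti subset_union_right (Measure.le_add_left le_rfl)
        (min_le_right _ _)

end CompactIntegralBall

theorem compactIntegralNhds_le_nhds {X : Type*} [MetricSpace X] [MeasurableSpace X]
    [BorelSpace X] (f : BoundedContinuousFunction X ℝ) :
    compactIntegralNhds f ≤ @nhds _ (tauK X) f := by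
  rw [tauK, inf_eq_iInf]
  simp only [_root_.nhds_iInf, nhds_induced, le_iInf_iff, Bool.forall_bool]
  refine ⟨fun s => ?_, fun K hK _ => ?_⟩
  · refine tendsto_iff_comap.1 <| Metric.tendsto_nhds.2 fun ε hε =>
      ⟨∅, isCompact_empty, s.totalVariation, inferInstance, ε, hε,
        fun g hg => (dist_intSM'_le s g f).trans_lt hg.2⟩
  · refine tendsto_iff_comap.1 <| UniformFun.tendsto_iff_tendstoUniformly.2 <|
      Metric.tendstoUniformly_iff.2 fun ε hε =>
        ⟨K, hK, 0, inferInstance, ε, hε, fun g hg x => by rw [dist_comm]; exact hg.1 x x.2⟩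

/-- If the metric space E is homeomorphic to a Borel subset of a Polish
space, then the bounded uniformly continuous functions are dense in (C_b(E), τ_K). -/
theorem stmt18 {E : Type*} [MetricSpace E] [MeasurableSpace E] [BorelSpace E]
    (P : Type*) [MetricSpace P] [PolishSpace P] [MeasurableSpace P] [BorelSpace P]
    (B : Set P) (hB : MeasurableSet B) (e : E ≃ₜ B) :
    @Dense (BoundedContinuousFunction E ℝ) (tauK E)
      {f : BoundedContinuousFunction E ℝ | UniformContinuous ⇑f} := by
  intro f
  refine (@mem_closure_iff_nhds _ (tauK E) _ _).2 fun U hU => ?_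
  obtain ⟨K, hK, μ, _, ε, hε, hU⟩ := compactIntegralNhds_le_nhds f hU
  obtain ⟨g, hg, hgU⟩ := f.exists_uniformContinuous_mem_compactIntegralBall hK
    (isTightMeasureSet_singleton_of_homeomorph_measurableSet hB e μ) hε
  exact ⟨g, hU hgU, hg⟩
end
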